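/- The constant B in the Hadamard product for ξ satisfies B = log 2 + (1/2) log π − 1 − γ/2, where γ is the Euler–Mascheroni constant; equivalently, evaluating ζ'(s)/ζ(s) = B − 1/(s−1) + (1/2) log π − (1/2) ψ(s/2 + 1) + Σ_ρ (1/(s−ρ) + 1/ρ) at s = 0, using ζ'(0)/ζ(0) = log(2π), yields this value of B. -/

import Mathlib

open Complex Real

/-- The digamma function ψ = Γ'/Γ. -/
noncomputable def digamma (z : ℂ) : ℂ := deriv Complex.Gamma z / Complex.Gamma z

theorem digamma_eq_complex_digamma : _root_.digamma = Complex.digamma := rfl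

theorem deriv_riemannZeta_zero_div_riemannZeta_zero :
    deriv riemannZeta 0 / riemannZeta 0 = Real.log (2 * π) := by
  rw [deriv_riemannZeta_zero, riemannZeta_zero, ofReal_log (by positivity)]
  push_cast
  ring

/-- The constant `B` in the Hadamard product for `ξ`: if `B` satisfies the
logarithmic-derivative identity
`ζ'(s)/ζ(s) = B − 1/(s−1) + (1/2) log π − (1/2) ψ(s/2 + 1) + Σ_ρ (1/(s−ρ) + 1/ρ)`
at `s = 0` (where the sum over zeros, `Z`, vanishes), then
`B = log 2 + (1/2) log π − 1 − γ/2`. -/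
theorem hadamard_constant_B (B : ℂ) (Z : ℂ → ℂ) (hZ : Z 0 = 0)
    (heq : deriv riemannZeta 0 / riemannZeta 0 =
      B - 1 / ((0 : ℂ) - 1) + (1 / 2) * Real.log π -
        (1 / 2) * _root_.digamma ((0 : ℂ) / 2 + 1) + Z 0) :
    B = Real.log 2 + (1 / 2) * Real.log π - 1 -
      (Real.eulerMascheroniConstant : ℂ) / 2 := by
  have hψ : _root_.digamma ((0 : ℂ) / 2 + 1) = -(Real.eulerMascheroniConstant : ℂ) := by
    rw [zero_div, zero_add, digamma_eq_complex_digamma, Complex.digamma_one]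
  have hlog : (Real.log (2 * π) : ℂ) = Real.log 2 + Real.log π := by
    rw [Real.log_mul two_ne_zero pi_ne_zero, ofReal_add]
  rw [deriv_riemannZeta_zero_div_riemannZeta_zero, hψ, hZ, hlog] at heq
  linear_combination -heq
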